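/- arXiv:2003.03225 — 3 statements merged into one kernel-verified Lean document; each statement's English description precedes it below -/
import Mathlib

section
/- In the target assignment game with N robots and N targets, where robot i's cost for joint action (a_i, a_{-i}) is u_i(a_i, a_{-i}) = Σ_k d_{ik} · ā_{-ik} · a_{ik} with d_{ik} > 0, the function u(a_i, a_{-i}) = Σ_k ā_{-ik} · a_{ik} is a best-response potential function: for every joint action of the other robots a_{-i}, the set of minimizers of u_i(·, a_{-i}) equals the set of minimizers of u(·, a_{-i}). -/
/-- Cost of robot `i` for choosing target `k` given the others' profile `a`:
`d i k` if some other robot selects `k`, else `0`. -/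
def costAt {N : ℕ} (d : Fin N → Fin N → ℝ) (a : Fin N → Fin N) (i k : Fin N) : ℝ :=
  if ∃ j, j ≠ i ∧ a j = k then d i k else 0

/-- Best-response potential value: `1` if some other robot selects `k`, else `0`. -/
def potAt {N : ℕ} (a : Fin N → Fin N) (i k : Fin N) : ℝ :=
  if ∃ j, j ≠ i ∧ a j = k then 1 else 0

/-- The function `u(a_i, a_{-i}) = Σ_k ā_{-ik} a_{ik}` is a best-response potential
for the target assignment game: minimizer sets coincide for every `a_{-i}`. -/
theorem target_assignment_best_response_potential {N : ℕ}
    (d : Fin N → Fin N → ℝ) (hd : ∀ i k, 0 < d i k)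
    (i : Fin N) (a : Fin N → Fin N) :
    {k | ∀ k', costAt d a i k ≤ costAt d a i k'} =
      {k | ∀ k', potAt a i k ≤ potAt a i k'} := by
  -- nonnegativity
  have hcost_nonneg : ∀ k, 0 ≤ costAt d a i k := by
    intro k; unfold costAt; split <;> [exact (hd i k).le; exact le_refl 0]
  have hpot_nonneg : ∀ k, 0 ≤ potAt a i k := by
    intro k; unfold potAt; split <;> norm_num
  -- there exists a free target
  obtain ⟨k₀, hk₀⟩ : ∃ k₀ : Fin N, ¬ ∃ j, j ≠ i ∧ a j = k₀ := by
    have hcard : ((Finset.univ.erase i).image a).card < Finset.univ.card (α := Fin N) := by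
      calc ((Finset.univ.erase i).image a).card ≤ (Finset.univ.erase i).card :=
            Finset.card_image_le
        _ < Finset.univ.card := Finset.card_erase_lt_of_mem (Finset.mem_univ i)
    have hne : (Finset.univ.erase i).image a ≠ Finset.univ := fun h => absurd hcard (by rw [h]; exact lt_irrefl _)
    obtain ⟨k₀, _, hk₀⟩ := Finset.exists_of_ssubset ((Finset.subset_univ _).ssubset_of_ne hne)
    refine ⟨k₀, ?_⟩
    rintro ⟨j, hj, rfl⟩
    exact hk₀ (Finset.mem_image_of_mem a (Finset.mem_erase.mpr ⟨hj, Finset.mem_univ j⟩))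
  have hck₀ : costAt d a i k₀ = 0 := by unfold costAt; simp [hk₀]
  have hpk₀ : potAt a i k₀ = 0 := by unfold potAt; simp [hk₀]
  -- cost zero iff pot zero iff free
  have hiff : ∀ k, costAt d a i k = 0 ↔ potAt a i k = 0 := by
    intro k; unfold costAt potAt
    split <;> simp_all [(hd i k).ne']
  ext k
  simp only [Set.mem_setOf_eq]
  constructor
  · intro h k'
    have hz : costAt d a i k = 0 := le_antisymm (hck₀ ▸ h k₀) (hcost_nonneg k)
    rw [(hiff k).mp hz]
    exact hpot_nonneg k'
  · intro h k'
    have hz : potAt a i k = 0 := le_antisymm (hpk₀ ▸ h k₀) (hpot_nonneg k)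
    rw [(hiff k).mpr hz]
    exact hcost_nonneg k'
end

section
/- A joint action profile a* in the target assignment game is a pure Nash equilibrium if and only if the assignment is a bijection between robots and targets (each target is selected by exactly one robot). -/
/-- Pure Nash equilibrium: no robot can strictly decrease its cost by a unilateral
deviation. -/
def isNE {N : ℕ} (d : Fin N → Fin N → ℝ) (a : Fin N → Fin N) : Prop :=
  ∀ i k, costAt d a i (a i) ≤ costAt d a i k

/-- A profile is a pure Nash equilibrium of the target assignment game iff the
robot-to-target assignment is a bijection. -/
theorem isNE_iff_bijective {N : ℕ}
    (d : Fin N → Fin N → ℝ) (hd : ∀ i k, 0 < d i k)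
    (a : Fin N → Fin N) :
    isNE d a ↔ Function.Bijective a := by
  constructor
  · intro hNE
    rw [Fintype.bijective_iff_injective_and_card]
    refine ⟨?_, rfl⟩
    by_contra hinj
    simp only [Function.Injective, not_forall] at hinj
    obtain ⟨i, j, hij, hne⟩ := hinj
    -- a is not surjective, so there's an unoccupied target k
    have hsurj : ¬ Function.Surjective a := fun hs =>
      hne (((Fintype.bijective_iff_surjective_and_card a).mpr ⟨hs, rfl⟩).1 hij)
    simp only [Function.Surjective, not_forall, not_exists] at hsurj
    obtain ⟨k, hk⟩ := hsurj
    have h1 : costAt d a i (a i) = d i (a i) := by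
      rw [costAt, if_pos ⟨j, fun h => hne h.symm, hij.symm⟩]
    have h2 : costAt d a i k = 0 := by
      rw [costAt, if_neg]
      rintro ⟨m, -, hm⟩
      exact hk m hm
    have := hNE i k
    rw [h1, h2] at this
    exact absurd this (not_le.mpr (hd i (a i)))
  · intro hb i k
    have h1 : costAt d a i (a i) = 0 := by
      rw [costAt, if_neg]
      rintro ⟨m, hm, hma⟩
      exact hm (hb.1 hma)
    rw [h1, costAt]
    split
    · exact (hd i k).le
    · exact le_refl 0
end

section
/- The target assignment game is weakly acyclic: from any joint action profile there exists a finite sequence of single-robot best-response improvements terminating at a pure Nash equilibrium. -/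
/-- A single-robot best-response improvement step: one robot switches to a
minimizer of its cost, strictly decreasing its own cost. -/
def brStep {N : ℕ} (d : Fin N → Fin N → ℝ) (a a' : Fin N → Fin N) : Prop :=
  ∃ i k, a' = Function.update a i k ∧
    costAt d a i k < costAt d a i (a i) ∧
    ∀ k', costAt d a i k ≤ costAt d a i k'

/-- Robots whose chosen target is also chosen by another robot. -/
def conflicted {N : ℕ} (a : Fin N → Fin N) : Finset (Fin N) :=
  Finset.univ.filter (fun i => ∃ j, j ≠ i ∧ a j = a i)

lemma costAt_nonneg {N : ℕ} (d : Fin N → Fin N → ℝ) (hd : ∀ i k, 0 < d i k)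
    (a : Fin N → Fin N) (i k : Fin N) : 0 ≤ costAt d a i k := by
  unfold costAt; split
  · exact (hd i k).le
  · exact le_refl 0

lemma exists_free {N : ℕ} (a : Fin N → Fin N) (i : Fin N) :
    ∃ k : Fin N, ∀ j, j ≠ i → a j ≠ k := by
  rcases Nat.eq_zero_or_pos N with h | h
  · exact absurd i.isLt (by omega)
  have hcard : ((Finset.univ.erase i).image a).card < Fintype.card (Fin N) := by
    calc ((Finset.univ.erase i).image a).card ≤ (Finset.univ.erase i).card :=
          Finset.card_image_le
      _ < Finset.univ.card := Finset.card_erase_lt_of_mem (Finset.mem_univ i)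
      _ = Fintype.card (Fin N) := rfl
  have hns : ¬ (Finset.univ ⊆ (Finset.univ.erase i).image a) := fun hs =>
    absurd (Finset.card_le_card hs) (by simpa [Finset.card_univ] using hcard)
  obtain ⟨k, _, hk⟩ := Finset.not_subset.mp hns
  exact ⟨k, fun j hj hjk => hk (Finset.mem_image.mpr ⟨j, Finset.mem_erase.mpr ⟨hj, Finset.mem_univ j⟩, hjk⟩)⟩

lemma exists_step {N : ℕ} (d : Fin N → Fin N → ℝ) (hd : ∀ i k, 0 < d i k)
    (a : Fin N → Fin N) (h : ¬ isNE d a) :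
    ∃ a', brStep d a a' ∧ (conflicted a').card < (conflicted a).card := by
  simp only [isNE, not_forall, not_le] at h
  obtain ⟨i, k0, hk0⟩ := h
  have hpos : 0 < costAt d a i (a i) :=
    lt_of_le_of_lt (costAt_nonneg d hd a i k0) hk0
  have hconf : ∃ j, j ≠ i ∧ a j = a i := by
    by_contra hc
    rw [costAt, if_neg hc] at hpos
    exact lt_irrefl 0 hpos
  obtain ⟨k, hk⟩ := exists_free a i
  have hfree : ¬ ∃ j, j ≠ i ∧ a j = k := by
    rintro ⟨j, hj, hjk⟩; exact hk j hj hjk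
  have hck : costAt d a i k = 0 := by rw [costAt, if_neg hfree]
  refine ⟨Function.update a i k, ⟨i, k, rfl, by rw [hck]; exact hpos,
    fun k' => by rw [hck]; exact costAt_nonneg d hd a i k'⟩, ?_⟩
  apply Finset.card_lt_card
  constructor
  · intro j hj
    simp only [conflicted, Finset.mem_filter, Finset.mem_univ, true_and] at hj ⊢
    obtain ⟨l, hl, hla⟩ := hj
    have hji : j ≠ i := by
      intro hji
      rw [hji] at hl hla
      rw [Function.update_self, Function.update_of_ne hl] at hla
      exact hfree ⟨l, hl, hla⟩
    rw [Function.update_of_ne hji] at hla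
    have hli : l ≠ i := by
      rintro rfl
      rw [Function.update_self] at hla
      exact hfree ⟨j, hji, hla.symm⟩
    rw [Function.update_of_ne hli] at hla
    exact ⟨l, hl, hla⟩
  · intro hsub
    have hi : i ∈ conflicted a := by
      simp only [conflicted, Finset.mem_filter, Finset.mem_univ, true_and]
      exact hconf
    have hi' := hsub hi
    simp only [conflicted, Finset.mem_filter, Finset.mem_univ, true_and] at hi'
    obtain ⟨l, hl, hla⟩ := hi'
    rw [Function.update_self, Function.update_of_ne hl] at hla
    exact hfree ⟨l, hl, hla⟩

lemma main_aux {N : ℕ} (d : Fin N → Fin N → ℝ) (hd : ∀ i k, 0 < d i k) :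
    ∀ (n : ℕ) (a : Fin N → Fin N), (conflicted a).card ≤ n →
    ∃ (m : ℕ) (p : ℕ → Fin N → Fin N), p 0 = a ∧
      (∀ t < m, brStep d (p t) (p (t + 1))) ∧ isNE d (p m) := by
  intro n
  induction n with
  | zero =>
    intro a ha
    refine ⟨0, fun _ => a, rfl, fun t ht => absurd ht (by omega), ?_⟩
    by_contra h
    obtain ⟨a', _, hlt⟩ := exists_step d hd a h
    omega
  | succ n ih =>
    intro a ha
    by_cases h : isNE d a
    · exact ⟨0, fun _ => a, rfl, fun t ht => absurd ht (by omega), h⟩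
    obtain ⟨a', hbr, hlt⟩ := exists_step d hd a h
    obtain ⟨m, p, hp0, hps, hpe⟩ := ih a' (by omega)
    refine ⟨m + 1, fun t => if t = 0 then a else p (t - 1), by simp, ?_, by simp [hpe]⟩
    intro t ht
    match t with
    | 0 => simpa [hp0] using hbr
    | (s + 1) =>
      simpa using hps s (by omega)

/-- The target assignment game is weakly acyclic: from any joint profile there is a
finite sequence of best-response improvement steps ending at a pure NE. -/
theorem target_assignment_weakly_acyclic {N : ℕ}
    (d : Fin N → Fin N → ℝ) (hd : ∀ i k, 0 < d i k)
    (a : Fin N → Fin N) :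
    ∃ (m : ℕ) (p : ℕ → Fin N → Fin N), p 0 = a ∧
      (∀ t < m, brStep d (p t) (p (t + 1))) ∧ isNE d (p m) := by
  exact main_aux d hd (conflicted a).card a le_rfl
end
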